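/- If σ is a transposition such that gσ has one more cycle than g (i.e., multiplying by σ splits a cycle of g of length a into two cycles of lengths b and c with a = b + c), then for z ∈ ℝ^m with z_j ≥ 0 and m > 1, k_z(g, e) ≤ k_z(gσ, e). If moreover z_j > 0 for at least two distinct indices j, the inequality is strict. -/

import Mathlib

/-!
Expanding `∏_c p_{|c|}(z)` over the cycles `c` of `g` (fixed points included) writes `k_z(g, e)`
as the sum of `∏_w z_{φ w}` over the colourings `φ` that are constant on the cycles of `g`; in
particular there are `m ^ #cycles` such colourings. A colouring constant on a cycle of `g`
containing `x` and `y` is also `g * swap x y`-invariant, so when `x` and `y` share a cycle of `g`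
the sum can only grow for `z ≥ 0`, and colouring the `g * swap x y`-cycle of `x` by `j` and the
rest by `l` adds a positive term once `x` and `y` are separated in `g * swap x y`. The extra
cycle forces this situation: `x` and `y` always share a cycle of `g` or of `g * swap x y`, and in
the latter case the inclusion would run the other way, although with two colours
`g * swap x y` has twice as many invariant colourings as `g`.
-/

/-- The cycle lengths of a permutation, including fixed points as cycles of length 1. -/
def cycleMu {n : ℕ} (g : Equiv.Perm (Fin n)) : Multiset ℕ :=
  g.cycleType + Multiset.replicate (n - g.cycleType.sum) 1

/-- The power sum kernel `k_z(g,h) = p_{μ(g h⁻¹)}(z) = ∏_j Σ_i z_i^{μ_j}`. -/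
def powerSumKernel {n m : ℕ} (z : Fin m → ℝ) (g h : Equiv.Perm (Fin n)) : ℝ :=
  ((cycleMu (g * h⁻¹)).map (fun d => ∑ i, z i ^ d)).prod

/-- The Cayley graph of `S_n` with respect to the set of all transpositions. -/
def cayleyGraph (n : ℕ) : SimpleGraph (Equiv.Perm (Fin n)) :=
  SimpleGraph.fromRel (fun g h => (g * h⁻¹).IsSwap)

open Equiv Finset

theorem Multiset.eq_filter_two_le_add_replicate (s : Multiset ℕ) (hs : ∀ d ∈ s, 0 < d) :
    s = s.filter (2 ≤ ·) + replicate (s.sum - (s.filter (2 ≤ ·)).sum) 1 := by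
  have hones : s.filter (¬ 2 ≤ ·) = replicate (card (s.filter (¬ 2 ≤ ·))) 1 :=
    eq_replicate_card.2 fun d hd => by
      have := hs d (mem_of_mem_filter hd)
      have := (mem_filter.1 hd).2
      omega
  have hsum := congrArg sum (filter_add_not (2 ≤ ·) s)
  rw [hones, sum_add, sum_replicate, smul_eq_mul, mul_one] at hsum
  conv_lhs => rw [← filter_add_not (2 ≤ ·) s, hones]
  congr 2
  omega

theorem Multiset.eq_of_filter_two_le_eq {s t : Multiset ℕ} (hs : ∀ d ∈ s, 0 < d)
    (ht : ∀ d ∈ t, 0 < d) (hsum : s.sum = t.sum) (h : s.filter (2 ≤ ·) = t.filter (2 ≤ ·)) :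
    s = t := by
  rw [s.eq_filter_two_le_add_replicate hs, t.eq_filter_two_le_add_replicate ht, hsum, h]

theorem Fintype.sum_pi_prod_comp_eq_prod_sum_pow {α β ι R : Type*} [Fintype α] [Fintype β]
    [DecidableEq β] [Fintype ι] [CommSemiring R] (f : α → β) (z : ι → R) :
    ∑ ψ : β → ι, ∏ a, z (ψ (f a)) = ∏ b, ∑ i, z i ^ #{a | f a = b} := by
  rw [Fintype.prod_sum]
  refine Fintype.sum_congr _ _ fun ψ => ?_
  rw [← Finset.prod_fiberwise univ f]
  refine Fintype.prod_congr _ _ fun b => ?_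
  rw [Finset.prod_congr rfl fun a ha => by rw [(mem_filter.1 ha).2], Finset.prod_const]

namespace Equiv.Perm

variable {α : Type*} [Fintype α] [DecidableEq α]

instance (g : Perm α) : DecidableRel (SameCycle.setoid g).r :=
  inferInstanceAs (DecidableRel g.SameCycle)

def invariantColorings (g : Perm α) (ι : Type*) [Fintype ι] [DecidableEq ι] :
    Finset (α → ι) :=
  {φ | ∀ a, φ (g a) = φ a}

variable {ι : Type*} [Fintype ι] [DecidableEq ι]

theorem mem_invariantColorings {g : Perm α} {φ : α → ι} :
    φ ∈ g.invariantColorings ι ↔ ∀ a, φ (g a) = φ a := by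
  simp [invariantColorings]

theorem mem_invariantColorings_iff_sameCycle {g : Perm α} {φ : α → ι} :
    φ ∈ g.invariantColorings ι ↔ ∀ a b, g.SameCycle a b → φ a = φ b := by
  rw [mem_invariantColorings]
  refine ⟨fun hφ a b hab => ?_, fun hφ a => (hφ a _ (sameCycle_apply_right.2 .rfl)).symm⟩
  obtain ⟨i, -, rfl⟩ := hab.exists_pow_eq'
  clear hab
  induction i with
  | zero => rfl
  | succ i ih => rw [pow_succ', mul_apply, hφ, ih]

theorem invariantColorings_eq_image (g : Perm α) :
    g.invariantColorings ι =
      univ.image fun ψ : Quotient (SameCycle.setoid g) → ι => ψ ∘ Quotient.mk _ := by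
  ext φ
  simp only [mem_invariantColorings_iff_sameCycle, mem_image, mem_univ, true_and]
  refine ⟨fun hφ => ⟨Quotient.lift φ hφ, rfl⟩, ?_⟩
  rintro ⟨ψ, rfl⟩ a b hab
  exact congrArg ψ (Quotient.sound hab)

theorem filter_sameCycle_eq_support_cycleOf {g : Perm α} {a : α} (ha : a ∈ g.support) :
    ({b | g.SameCycle a b} : Finset α) = (g.cycleOf a).support := by
  ext b
  simp only [mem_filter, mem_univ, true_and, mem_support_cycleOf_iff, ha, and_true]

theorem filter_sameCycle_eq_singleton {g : Perm α} {a : α} (ha : a ∉ g.support) :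
    ({b | g.SameCycle a b} : Finset α) = {a} := by
  ext b
  simp only [mem_filter, mem_univ, true_and, mem_singleton]
  exact ⟨fun h => (h.eq_of_left (notMem_support.1 ha)).symm, fun h => h ▸ .rfl⟩

theorem two_le_card_filter_sameCycle_iff {g : Perm α} {a : α} :
    2 ≤ #{b | g.SameCycle a b} ↔ a ∈ g.support := by
  by_cases ha : a ∈ g.support
  · simp [filter_sameCycle_eq_support_cycleOf ha, mem_support.1 ha, ha]
  · simp [filter_sameCycle_eq_singleton ha, ha]

theorem card_fiber_mk_sameCycle (g : Perm α) (a : α) :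
    #{b | (Quotient.mk (SameCycle.setoid g) b) = Quotient.mk _ a} = #{b | g.SameCycle a b} := by
  simp only [Quotient.eq]
  exact congrArg card (filter_congr fun b _ => sameCycle_comm)

theorem filter_map_card_fiber_mk_sameCycle (g : Perm α) :
    ((univ : Finset (Quotient (SameCycle.setoid g))).val.map
      (fun q => #{a | Quotient.mk _ a = q})).filter (2 ≤ ·) = g.cycleType := by
  set S := fun q : Quotient (SameCycle.setoid g) => #{a | Quotient.mk _ a = q}
  let c : Quotient (SameCycle.setoid g) → Perm α :=
    Quotient.lift g.cycleOf fun _ _ h => h.cycleOf_eq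
  have hmem : ∀ a, Quotient.mk _ a ∈ univ.filter (2 ≤ S ·) ↔ a ∈ g.support := fun a => by
    simp only [mem_filter, mem_univ, true_and, S, card_fiber_mk_sameCycle,
      two_le_card_filter_sameCycle_iff]
  have hS : ∀ q ∈ univ.filter (2 ≤ S ·), S q = #(c q).support := by
    intro q
    induction q using Quotient.ind with | _ a => ?_
    intro ha
    simp only [S, card_fiber_mk_sameCycle, filter_sameCycle_eq_support_cycleOf ((hmem a).1 ha)]
    rfl
  have himage : (univ.filter (2 ≤ S ·)).image c = g.cycleFactorsFinset := by
    ext k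
    simp only [mem_image]
    constructor
    · rintro ⟨q, hq, rfl⟩
      induction q using Quotient.ind with | _ a => ?_
      exact cycleOf_mem_cycleFactorsFinset_iff.2 ((hmem a).1 hq)
    · intro hk
      obtain ⟨a, ha⟩ := (mem_cycleFactorsFinset_iff.1 hk).1.nonempty_support
      exact ⟨Quotient.mk _ a, (hmem a).2 (mem_cycleFactorsFinset_support_le hk ha),
        (cycle_is_cycleOf ha hk).symm⟩
  have hinj : Set.InjOn c (univ.filter (2 ≤ S ·)) := by
    intro q hq r hr hqr
    induction q using Quotient.ind with | _ a => ?_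
    induction r using Quotient.ind with | _ b => ?_
    exact Quotient.sound ((sameCycle_iff_cycleOf_eq_of_mem_support
      ((hmem a).1 hq) ((hmem b).1 hr)).2 hqr)
  rw [Multiset.filter_map, cycleType_def, ← himage, image_val_of_injOn hinj, Multiset.map_map]
  exact Multiset.map_congr rfl fun q hq => hS q (by simpa using hq)

theorem map_card_fiber_mk_sameCycle (g : Perm α) :
    (univ : Finset (Quotient (SameCycle.setoid g))).val.map
      (fun q => #{a | Quotient.mk _ a = q}) = g.partition.parts := by
  refine Multiset.eq_of_filter_two_le_eq ?_ (fun _ => g.partition.parts_pos) ?_ ?_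
  · simp only [Multiset.mem_map, mem_val, mem_univ, true_and, forall_exists_index,
      forall_apply_eq_imp_iff]
    exact Quotient.ind fun a => card_pos.2 ⟨a, by simp⟩
  · rw [g.partition.parts_sum, ← Finset.sum_eq_multiset_sum,
      ← card_eq_sum_card_fiberwise (fun _ _ => mem_univ _), card_univ]
  · rw [filter_map_card_fiber_mk_sameCycle, filter_parts_partition_eq_cycleType]

variable {R : Type*} [CommSemiring R]

theorem prod_map_parts_partition_eq_sum_invariantColorings (g : Perm α) (z : ι → R) :
    (g.partition.parts.map fun d => ∑ i, z i ^ d).prod =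
      ∑ φ ∈ g.invariantColorings ι, ∏ a, z (φ a) := by
  rw [invariantColorings_eq_image, sum_image fun ψ _ χ _ h =>
      Quotient.mk_surjective.injective_comp_right h]
  simp only [Function.comp_apply]
  rw [Fintype.sum_pi_prod_comp_eq_prod_sum_pow, ← map_card_fiber_mk_sameCycle, Multiset.map_map]
  rfl

theorem card_invariantColorings (g : Perm α) :
    #(g.invariantColorings ι) = Fintype.card ι ^ Multiset.card g.partition.parts := by
  simpa using (prod_map_parts_partition_eq_sum_invariantColorings (R := ℕ) g fun _ : ι => 1).symm

theorem invariantColorings_subset_mul_swap {g : Perm α} {x y : α} (h : g.SameCycle x y) :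
    g.invariantColorings ι ⊆ (g * swap x y).invariantColorings ι := by
  intro φ hφ
  have hxy := mem_invariantColorings_iff_sameCycle.1 hφ x y h
  rw [mem_invariantColorings] at hφ ⊢
  intro a
  rw [mul_apply, hφ, swap_apply_def]
  split_ifs <;> simp_all

theorem ite_sameCycle_mem_invariantColorings (g : Perm α) (x : α) (j l : ι) :
    (fun a => if g.SameCycle x a then j else l) ∈ g.invariantColorings ι := by
  simp [mem_invariantColorings, sameCycle_apply_right]

theorem sameCycle_or_sameCycle_mul_swap (g : Perm α) (x y : α) :
    g.SameCycle x y ∨ (g * swap x y).SameCycle x y := by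
  refine or_iff_not_imp_left.2 fun hxy => ?_
  have hne : ∀ j : ℕ, (g ^ j) x ≠ y := fun j h => hxy ⟨j, by rw [zpow_natCast, h]⟩
  have hex : ∃ k, 0 < k ∧ (g ^ k) x = x :=
    ⟨orderOf g, orderOf_pos g, by rw [pow_orderOf_eq_one, one_apply]⟩
  obtain ⟨hpos, hper⟩ := Nat.find_spec hex
  -- from `y`, the permutation `g * swap x y` retraces the `g`-orbit of `x` until it closes up
  have key : ∀ j < Nat.find hex, ((g * swap x y) ^ (j + 1)) y = (g ^ (j + 1)) x := by
    intro j
    induction j with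
    | zero => simp
    | succ j ih =>
      intro hj
      rw [pow_succ', mul_apply, ih (by omega), mul_apply,
        swap_apply_of_ne_of_ne (fun h => Nat.find_min hex hj ⟨by omega, h⟩) (hne _),
        ← mul_apply, ← pow_succ']
  refine SameCycle.symm ⟨Nat.find hex, ?_⟩
  rw [zpow_natCast, ← Nat.sub_add_cancel hpos, key _ (by omega), Nat.sub_add_cancel hpos, hper]

theorem sameCycle_and_not_sameCycle_mul_swap {g : Perm α} {x y : α}
    (h : Multiset.card (g * swap x y).partition.parts = Multiset.card g.partition.parts + 1) :
    g.SameCycle x y ∧ ¬ (g * swap x y).SameCycle x y := by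
  have hsep : ¬ (g * swap x y).SameCycle x y := fun hmerge => by
    have hle := card_le_card (invariantColorings_subset_mul_swap (ι := Bool) hmerge)
    rw [mul_swap_mul_self, card_invariantColorings, card_invariantColorings, h, pow_succ,
      Fintype.card_bool] at hle
    have : 0 < 2 ^ Multiset.card g.partition.parts := by positivity
    omega
  exact ⟨(sameCycle_or_sameCycle_mul_swap g x y).resolve_right hsep, hsep⟩

end Equiv.Perm

theorem cycleMu_eq_parts_partition {n : ℕ} (g : Perm (Fin n)) : cycleMu g = g.partition.parts := by
  rw [cycleMu, Perm.parts_partition, Perm.sum_cycleType, Fintype.card_fin]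

theorem powerSumKernel_one_eq_sum_invariantColorings {n m : ℕ} (z : Fin m → ℝ) (g : Perm (Fin n)) :
    powerSumKernel z g 1 = ∑ φ ∈ g.invariantColorings (Fin m), ∏ w, z (φ w) := by
  rw [powerSumKernel, inv_one, mul_one, cycleMu_eq_parts_partition,
    Perm.prod_map_parts_partition_eq_sum_invariantColorings]

theorem powerSumKernel_mul_swap_le_general {n m : ℕ} (z : Fin m → ℝ)
    (hz : ∀ j, 0 ≤ z j) (g σ : Equiv.Perm (Fin n)) (hσ : σ.IsSwap)
    (hsplit : Multiset.card (cycleMu (g * σ)) = Multiset.card (cycleMu g) + 1) :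
    powerSumKernel z g 1 ≤ powerSumKernel z (g * σ) 1 ∧
      ((∃ j l : Fin m, j ≠ l ∧ 0 < z j ∧ 0 < z l) →
        powerSumKernel z g 1 < powerSumKernel z (g * σ) 1) := by
  obtain ⟨x, y, -, rfl⟩ := hσ
  rw [cycleMu_eq_parts_partition, cycleMu_eq_parts_partition] at hsplit
  obtain ⟨hsame, hsep⟩ := Perm.sameCycle_and_not_sameCycle_mul_swap hsplit
  have hsub := Perm.invariantColorings_subset_mul_swap (ι := Fin m) hsame
  have hnonneg : ∀ φ : Fin n → Fin m, 0 ≤ ∏ w, z (φ w) := fun φ => prod_nonneg fun w _ => hz _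
  rw [powerSumKernel_one_eq_sum_invariantColorings, powerSumKernel_one_eq_sum_invariantColorings]
  refine ⟨sum_le_sum_of_subset_of_nonneg hsub fun φ _ _ => hnonneg φ, ?_⟩
  rintro ⟨j, l, hjl, hj, hl⟩
  refine sum_lt_sum_of_subset hsub (Perm.ite_sameCycle_mem_invariantColorings _ x j l) ?_ ?_
    fun φ _ _ => hnonneg φ
  · intro hmem
    have := Perm.mem_invariantColorings_iff_sameCycle.1 hmem x y hsame
    simp only [Perm.SameCycle.rfl, hsep, if_false] at this
    exact hjl this
  · exact prod_pos fun w _ => by dsimp only; split_ifs <;> assumption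

theorem powerSumKernel_mul_swap_le {n m : ℕ} (hm : 1 < m) (z : Fin m → ℝ)
    (hz : ∀ j, 0 ≤ z j) (g σ : Equiv.Perm (Fin n)) (hσ : σ.IsSwap)
    (hsplit : Multiset.card (cycleMu (g * σ)) = Multiset.card (cycleMu g) + 1) :
    powerSumKernel z g 1 ≤ powerSumKernel z (g * σ) 1 ∧
      ((∃ j l : Fin m, j ≠ l ∧ 0 < z j ∧ 0 < z l) →
        powerSumKernel z g 1 < powerSumKernel z (g * σ) 1) :=
  powerSumKernel_mul_swap_le_general z hz g σ hσ hsplit
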